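/- Let k ≥ 2 and define p_n(z) by the recursion p_0 = 1, p_1 = z, p_2 = z² − 2k, p_{n+1} = z·p_n − (2k−1)·p_{n−1} for n ≥ 2, and let e_n = 2k(2k−1)^{n−1} for n ≥ 1, e_0 = 1. Then for every n ≥ 1, z = 2k is a root of multiplicity exactly one of the polynomial p_n(z) − e_n. -/

import Mathlib

/-- The sphere of radius `n` about the identity in the free group `F_k`:
the finite set of elements of reduced word length `n`. -/
noncomputable def sphere (k n : ℕ) : Finset (FreeGroup (Fin k)) :=
  (Set.Finite.preimage (Function.Injective.injOn FreeGroup.toWord_injective)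
    (List.finite_length_eq ((Fin k) × Bool) n)).toFinset

/-- `χ_n = ∑_{|x| = n} x`, the sum of the sphere of radius `n` in `ℂ[F_k]`. -/
noncomputable def chi (k n : ℕ) : MonoidAlgebra ℂ (FreeGroup (Fin k)) :=
  ∑ x ∈ sphere k n, MonoidAlgebra.of ℂ (FreeGroup (Fin k)) x

/-- The polynomials `p_0 = 1`, `p_1 = z`, `p_2 = z² - 2k`,
`p_{n+1} = z p_n - (2k-1) p_{n-1}` for `n ≥ 2`. -/
noncomputable def p (k : ℕ) : ℕ → Polynomial ℂ
  | 0 => 1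
  | 1 => Polynomial.X
  | 2 => Polynomial.X ^ 2 - Polynomial.C ((2 * k : ℕ) : ℂ)
  | (n + 3) => Polynomial.X * p k (n + 2) - Polynomial.C ((2 * k - 1 : ℕ) : ℂ) * p k (n + 1)

/-- `e_0 = 1` and `e_n = 2k(2k-1)^{n-1}` for `n ≥ 1`, the cardinality of the sphere. -/
def eN (k n : ℕ) : ℕ := if n = 0 then 1 else 2 * k * (2 * k - 1) ^ (n - 1)

/-! The recursion for `p_n` evaluated at `z = 2k` is the recursion satisfied by `e_n`, so `2k` is a
root of `p_n - e_n`. Differentiating the recursion and writing `2k = (2k-1) + 1`, the values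
`d_n = p_n'(2k)` satisfy `d_{n+1} - (2k-1) d_n = (d_n - (2k-1) d_{n-1}) + e_n`, which telescopes to
`d_{n+1} = (2k-1) d_n + e_0 + ⋯ + e_n`. Hence `d_n` is a natural number, positive for `n ≥ 1`,
and the root is simple. -/

open Polynomial Finset

theorem Polynomial.rootMultiplicity_eq_one_of_isRoot_of_not_isRoot_derivative {R : Type*}
    [CommRing R] {f : R[X]} {t : R} (hf : f.IsRoot t) (hf' : ¬ f.derivative.IsRoot t) :
    f.rootMultiplicity t = 1 := by
  have hf0 : f ≠ 0 := by
    rintro rfl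
    exact hf' (by simp)
  have h_pos := (rootMultiplicity_pos hf0).2 hf
  have h_not_gt := mt (one_lt_rootMultiplicity_iff_isRoot hf0).1 fun h => hf' h.2
  omega

theorem eN_succ (k n : ℕ) : eN k (n + 1) = 2 * k * (2 * k - 1) ^ n := by
  simp [eN]

theorem eN_add_three (k n : ℕ) (hk : 1 ≤ k) :
    eN k (n + 3) + (2 * k - 1) * eN k (n + 1) = 2 * k * eN k (n + 2) := by
  obtain ⟨q, hq⟩ : ∃ q, 2 * k = q + 1 := ⟨2 * k - 1, by omega⟩
  simp only [eN_succ, hq, Nat.add_sub_cancel]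
  ring

def derivSeq (k : ℕ) : ℕ → ℕ
  | 0 => 0
  | n + 1 => (2 * k - 1) * derivSeq k n + ∑ i ∈ range (n + 1), eN k i

theorem derivSeq_add_three (k n : ℕ) (hk : 1 ≤ k) :
    derivSeq k (n + 3) + (2 * k - 1) * derivSeq k (n + 1)
      = eN k (n + 2) + 2 * k * derivSeq k (n + 2) := by
  obtain ⟨q, hq⟩ : ∃ q, 2 * k = q + 1 := ⟨2 * k - 1, by omega⟩
  have h_succ : derivSeq k (n + 2) = q * derivSeq k (n + 1) + ∑ i ∈ range (n + 2), eN k i := by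
    rw [derivSeq, hq, Nat.add_sub_cancel]
  rw [derivSeq, sum_range_succ, h_succ, hq, Nat.add_sub_cancel]
  ring

theorem derivSeq_succ_pos (k n : ℕ) : 0 < derivSeq k (n + 1) := by
  have h_first : eN k 0 ≤ ∑ i ∈ range (n + 1), eN k i :=
    single_le_sum (fun _ _ => Nat.zero_le _) (mem_range.2 n.succ_pos)
  have h_e0 : eN k 0 = 1 := rfl
  rw [derivSeq]
  omega

theorem eval_two_mul_p (k : ℕ) (hk : 1 ≤ k) :
    ∀ n, (p k n).eval ((2 * k : ℕ) : ℂ) = eN k n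
  | 0 => by simp [p, eN]
  | 1 => by simp [p, eN]
  | 2 => by
      simp only [p, eval_sub, eval_pow, eval_X, eval_C, eN_succ, pow_one]
      push_cast [Nat.cast_sub (show 1 ≤ 2 * k by omega)]
      ring
  | n + 3 => by
      simp only [p, eval_sub, eval_mul, eval_X, eval_C, eval_two_mul_p k hk (n + 2),
        eval_two_mul_p k hk (n + 1)]
      rw [eq_comm, eq_sub_iff_add_eq]
      exact_mod_cast eN_add_three k n hk

theorem eval_two_mul_derivative_p (k : ℕ) (hk : 1 ≤ k) :
    ∀ n, (derivative (p k n)).eval ((2 * k : ℕ) : ℂ) = derivSeq k n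
  | 0 => by simp [p, derivSeq]
  | 1 => by simp [p, derivSeq, eN]
  | 2 => by
      simp only [p, derivative_sub, derivative_X_pow, derivative_C, sub_zero, eval_mul, eval_C,
        eval_pow, eval_X, derivSeq, sum_range_succ, sum_range_zero, eN, if_pos]
      push_cast [Nat.cast_sub (show 1 ≤ 2 * k by omega)]
      ring
  | n + 3 => by
      simp only [p, derivative_sub, derivative_mul, derivative_X, derivative_C, one_mul,
        zero_mul, zero_add, eval_sub, eval_add, eval_mul, eval_X, eval_C,
        eval_two_mul_p k hk (n + 2), eval_two_mul_derivative_p k hk (n + 2),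
        eval_two_mul_derivative_p k hk (n + 1)]
      rw [eq_comm, eq_sub_iff_add_eq]
      exact_mod_cast derivSeq_add_three k n hk

/-- `z = 2k` is a root of multiplicity exactly one of `p_n(z) - e_n` for every `n ≥ 1`. -/
theorem stmt9 (k : ℕ) (hk : 2 ≤ k) (n : ℕ) (hn : 1 ≤ n) :
    (p k n - Polynomial.C ((eN k n : ℕ) : ℂ)).rootMultiplicity (((2 * k : ℕ) : ℂ)) = 1 := by
  obtain ⟨m, rfl⟩ : ∃ m, n = m + 1 := ⟨n - 1, by omega⟩
  apply rootMultiplicity_eq_one_of_isRoot_of_not_isRoot_derivative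
  · rw [IsRoot.def, eval_sub, eval_C, eval_two_mul_p k (by omega), sub_self]
  · rw [IsRoot.def, derivative_sub, derivative_C, sub_zero, eval_two_mul_derivative_p k (by omega),
      Nat.cast_eq_zero]
    exact (derivSeq_succ_pos k m).ne'
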